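/- arXiv:1706.07021 — 6 statements merged into one kernel-verified Lean document; each statement's English description precedes it below -/
import Mathlib

section
/- Let v⁺ > 0, v⁻ < 0, p⁺ ∈ (0,1), p⁻ = 1 - p⁺, q⁺ := v⁻/(v⁻ - v⁺), q⁻ := 1 - q⁺, and f* := -(p⁺·v⁺ + p⁻·v⁻)/(v⁺·v⁻). Then p⁺·ln(1 + f*·v⁺) + p⁻·ln(1 + f*·v⁻) = p⁺·ln(p⁺/q⁺) + p⁻·ln(p⁻/q⁻), i.e. the expected log-growth per trade at the optimal leverage equals the Kullback–Leibler divergence between the probability distributions {p⁺, p⁻} and {q⁺, q⁻}. -/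
/-! At the optimal leverage `f*` the wealth factors `1 + f* v⁺` and `1 + f* v⁻` are exactly the
likelihood ratios `p⁺ / q⁺` and `p⁻ / q⁻`; averaging their logarithms under `p` gives the
Kullback–Leibler divergence. -/

lemma one_add_optimal_leverage_mul_up {p u d : ℝ} (hu : u ≠ 0) (hd : d ≠ 0) :
    1 + -(p * u + (1 - p) * d) / (u * d) * u = p / (d / (d - u)) := by
  field_simp
  ring

lemma one_add_optimal_leverage_mul_down {p u d : ℝ} (hu : u ≠ 0) (hd : d ≠ 0) (hdu : d - u ≠ 0) :
    1 + -(p * u + (1 - p) * d) / (u * d) * d = (1 - p) / (1 - d / (d - u)) := by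
  rw [one_sub_div hdu, sub_sub_cancel_left, div_div_eq_mul_div]
  field_simp
  ring

theorem log_growth_at_optimal_leverage_eq_KL_general (vp vm pp : ℝ) (hvp : 0 < vp) (hvm : vm < 0)
    (pm qp qm fstar : ℝ)
    (hpm : pm = 1 - pp) (hqp : qp = vm / (vm - vp)) (hqm : qm = 1 - qp)
    (hfstar : fstar = -(pp * vp + pm * vm) / (vp * vm)) :
    pp * Real.log (1 + fstar * vp) + pm * Real.log (1 + fstar * vm)
      = pp * Real.log (pp / qp) + pm * Real.log (pm / qm) := by
  subst hpm hqm hqp hfstar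
  have hvmvp : vm - vp ≠ 0 := (sub_neg.mpr (hvm.trans hvp)).ne
  rw [one_add_optimal_leverage_mul_up hvp.ne' hvm.ne,
    one_add_optimal_leverage_mul_down hvp.ne' hvm.ne hvmvp]

theorem log_growth_at_optimal_leverage_eq_KL (vp vm pp : ℝ) (hvp : 0 < vp) (hvm : vm < 0)
    (hpp : pp ∈ Set.Ioo (0 : ℝ) 1) (pm qp qm fstar : ℝ)
    (hpm : pm = 1 - pp) (hqp : qp = vm / (vm - vp)) (hqm : qm = 1 - qp)
    (hfstar : fstar = -(pp * vp + pm * vm) / (vp * vm))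
    (hgt : qp < pp) :
    pp * Real.log (1 + fstar * vp) + pm * Real.log (1 + fstar * vm)
      = pp * Real.log (pp / qp) + pm * Real.log (pm / qm) :=
  log_growth_at_optimal_leverage_eq_KL_general vp vm pp hvp hvm pm qp qm fstar hpm hqp hqm hfstar
end

section
/- Define ψ₁(x) := 2·∫₀ˣ e^{t²} (∫₀ᵗ e^{-u²} du) dt. Then ψ₁ is an even function and admits the Maclaurin series ψ₁(x) = Σ_{n=0}^∞ 2ⁿ · x^{2n+2} / ((2n+1)!! · (n+1)) for all real x. -/
open Real intervalIntegral

noncomputable def psi1 (x : ℝ) : ℝ :=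
  2 * ∫ t in (0 : ℝ)..x, Real.exp (t ^ 2) * ∫ u in (0 : ℝ)..t, Real.exp (-u ^ 2)

open scoped Nat

/-!
Both `h t = exp (t ^ 2) * ∫ u in 0..t, exp (-u ^ 2)` and the odd series
`S t = ∑ 2 ^ n * t ^ (2 * n + 1) / (2 * n + 1)‼` solve `y' = 1 + 2 * t * y`, `y 0 = 0`; for `S`
this is the coefficient recurrence `(2 * n + 3) * c (n + 1) = 2 * c n`. Hence
`exp (-t ^ 2) * S t - ∫ u in 0..t, exp (-u ^ 2)` has zero derivative and vanishes, so `h = S`.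
Integrating `S` termwise, with the terms on `[0, x]` dominated by their values at `|x|`, gives the
series of `ψ₁ = 2 * ∫ t in 0..x, h t`, which has only even powers of `x`.
-/

theorem Nat.factorial_mul_le_doubleFactorial (n : ℕ) : n ! * (2 * n + 1) ≤ (2 * n + 1)‼ := by
  induction n with
  | zero => simp
  | succ n ih =>
    rw [show 2 * (n + 1) + 1 = 2 * n + 1 + 2 by ring, Nat.doubleFactorial_add_two,
      Nat.factorial_succ]
    calc (n + 1) * n ! * (2 * n + 1 + 2) ≤ (2 * n + 1 + 2) * (n ! * (2 * n + 1)) := by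
          nlinarith [Nat.zero_le (n ! * n)]
      _ ≤ (2 * n + 1 + 2) * (2 * n + 1)‼ := Nat.mul_le_mul_left _ ih

namespace Psi1

noncomputable def coeff (n : ℕ) : ℝ := 2 ^ n / (2 * n + 1)‼

lemma coeff_nonneg (n : ℕ) : 0 ≤ coeff n := by unfold coeff; positivity

lemma coeff_succ (n : ℕ) : (2 * n + 3) * coeff (n + 1) = 2 * coeff n := by
  rw [coeff, coeff, show 2 * (n + 1) + 1 = 2 * n + 1 + 2 by ring, Nat.doubleFactorial_add_two]
  have : ((2 * n + 1)‼ : ℝ) ≠ 0 := by positivity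
  push_cast
  field_simp
  ring

lemma coeff_mul_le (n : ℕ) : coeff n * (2 * n + 1) ≤ 2 ^ n / n ! := by
  rw [coeff, div_mul_eq_mul_div, div_le_div_iff₀ (by positivity) (by positivity)]
  calc 2 ^ n * (2 * n + 1) * (n ! : ℝ) = 2 ^ n * ((n ! * (2 * n + 1) : ℕ) : ℝ) := by
        push_cast; ring
    _ ≤ 2 ^ n * (2 * n + 1)‼ := by
        gcongr; exact_mod_cast Nat.factorial_mul_le_doubleFactorial n

lemma coeff_mul_nonneg (n : ℕ) : 0 ≤ coeff n * (2 * n + 1) :=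
  mul_nonneg (coeff_nonneg n) (by positivity)

lemma summable_coeff_mul_pow_two_mul (y : ℝ) :
    Summable fun n => coeff n * (2 * n + 1) * y ^ (2 * n) := by
  refine (Real.summable_pow_div_factorial (2 * y ^ 2)).of_nonneg_of_le
    (fun n => mul_nonneg (coeff_mul_nonneg n) ((even_two_mul n).pow_nonneg y)) fun n => ?_
  rw [mul_pow, ← pow_mul, mul_div_right_comm]
  exact mul_le_mul_of_nonneg_right (coeff_mul_le n) ((even_two_mul n).pow_nonneg y)

lemma summable_coeff_mul_pow (t : ℝ) : Summable fun n => coeff n * t ^ (2 * n + 1) := by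
  refine .of_norm_bounded ((summable_coeff_mul_pow_two_mul t).mul_left |t|) fun n => ?_
  have ht := (even_two_mul n).pow_nonneg t
  calc ‖coeff n * t ^ (2 * n + 1)‖ = |t| * (coeff n * t ^ (2 * n)) := by
        rw [norm_mul, Real.norm_of_nonneg (coeff_nonneg n), norm_pow, Real.norm_eq_abs, pow_succ,
          pow_abs, abs_of_nonneg ht]
        ring
    _ ≤ |t| * (coeff n * (2 * n + 1) * t ^ (2 * n)) := by
        gcongr
        exact le_mul_of_one_le_right (coeff_nonneg n) (by linarith [n.cast_nonneg (α := ℝ)])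

noncomputable def series (t : ℝ) : ℝ := ∑' n, coeff n * t ^ (2 * n + 1)

lemma hasSum_coeff_mul_pow_two_mul (t : ℝ) :
    HasSum (fun n => coeff n * (2 * n + 1) * t ^ (2 * n)) (1 + 2 * t * series t) := by
  refine (hasSum_nat_add_iff' 1).mp ?_
  have hterm : (fun n : ℕ => coeff (n + 1) * (2 * ((n + 1 : ℕ) : ℝ) + 1) * t ^ (2 * (n + 1)))
      = fun n => 2 * t * (coeff n * t ^ (2 * n + 1)) := by
    funext n
    have := coeff_succ n
    push_cast
    linear_combination t ^ (2 * n + 2) * this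
  have hsum : 1 + 2 * t * series t - ∑ n ∈ Finset.range 1, coeff n * (2 * n + 1) * t ^ (2 * n)
      = 2 * t * series t := by
    simp [coeff]
  rw [hterm, hsum]
  exact (summable_coeff_mul_pow t).hasSum.mul_left (2 * t)

lemma hasDerivAt_series (t : ℝ) : HasDerivAt series (1 + 2 * t * series t) t := by
  have hR : 0 < |t| + 1 := by positivity
  have hderiv := hasDerivAt_tsum_of_isPreconnected (g := fun n y => coeff n * y ^ (2 * n + 1))
    (g' := fun n y => coeff n * (2 * n + 1) * y ^ (2 * n))
    (summable_coeff_mul_pow_two_mul (|t| + 1))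
    Metric.isOpen_ball (convex_ball 0 (|t| + 1)).isPreconnected (fun n y _ => ?_)
    (fun n y hy => ?_) (Metric.mem_ball_self hR) (summable_coeff_mul_pow 0)
    (show t ∈ Metric.ball 0 (|t| + 1) by simp)
  · rwa [(hasSum_coeff_mul_pow_two_mul t).tsum_eq] at hderiv
  · refine ((hasDerivAt_pow (2 * n + 1) y).const_mul (coeff n)).congr_deriv ?_
    rw [Nat.add_sub_cancel]
    push_cast
    ring
  · have hy : |y| ≤ |t| + 1 := by simpa using (Metric.mem_ball.mp hy).le
    rw [norm_mul, norm_pow, Real.norm_of_nonneg (coeff_mul_nonneg n), Real.norm_eq_abs]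
    gcongr
    exact coeff_mul_nonneg n

lemma series_eq (t : ℝ) : series t = exp (t ^ 2) * ∫ u in (0 : ℝ)..t, exp (-u ^ 2) := by
  let D : ℝ → ℝ := fun s => exp (-s ^ 2) * series s - ∫ u in (0 : ℝ)..s, exp (-u ^ 2)
  have hD : ∀ s, HasDerivAt D 0 s := by
    intro s
    have hexp : HasDerivAt (fun s => exp (-s ^ 2)) (exp (-s ^ 2) * (-(2 * s))) s := by
      simpa using ((hasDerivAt_pow 2 s).neg).exp
    have hgauss : HasDerivAt (fun s => ∫ u in (0 : ℝ)..s, exp (-u ^ 2)) (exp (-s ^ 2)) s :=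
      ((by fun_prop : Continuous fun u : ℝ => exp (-u ^ 2)).integral_hasStrictDerivAt 0
        s).hasDerivAt
    exact ((hexp.mul (hasDerivAt_series s)).sub hgauss).congr_deriv (by ring)
  have hD0 : D t = D 0 := is_const_of_deriv_eq_zero (fun s => (hD s).differentiableAt)
    (fun s => (hD s).deriv) t 0
  have hseries0 : series 0 = 0 := by simp [series]
  simp only [D, hseries0, integral_same, mul_zero, sub_zero, sub_eq_zero] at hD0
  rw [← hD0, ← mul_assoc, ← exp_add]
  simp

lemma hasSum_exp_mul_integral (t : ℝ) :
    HasSum (fun n => coeff n * t ^ (2 * n + 1))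
      (exp (t ^ 2) * ∫ u in (0 : ℝ)..t, exp (-u ^ 2)) :=
  series_eq t ▸ (summable_coeff_mul_pow t).hasSum

open MeasureTheory in
lemma hasSum_psi1 (x : ℝ) :
    HasSum (fun n : ℕ =>
        (2 : ℝ) ^ n * x ^ (2 * n + 2) / ((Nat.doubleFactorial (2 * n + 1) : ℝ) * (n + 1)))
      (psi1 x) := by
  have hbound (n : ℕ) (t : ℝ) (ht : t ∈ Set.uIoc 0 x) :
      ‖coeff n * t ^ (2 * n + 1)‖ ≤ coeff n * |x| ^ (2 * n + 1) := by
    have htx : |t| ≤ |x| := by simpa using Set.abs_sub_left_of_mem_uIcc (Set.uIoc_subset_uIcc ht)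
    rw [norm_mul, norm_pow, Real.norm_of_nonneg (coeff_nonneg n), Real.norm_eq_abs]
    gcongr
    exact coeff_nonneg n
  have htermwise := hasSum_integral_of_dominated_convergence (μ := volume) (a := 0) (b := x)
    (F := fun n t => coeff n * t ^ (2 * n + 1)) (bound := fun n _ => coeff n * |x| ^ (2 * n + 1))
    (fun n => (by fun_prop : Continuous fun t : ℝ => coeff n * t ^ (2 * n + 1))
      |>.aestronglyMeasurable)
    (fun n => ae_of_all _ (hbound n)) (ae_of_all _ fun _ _ => summable_coeff_mul_pow |x|)
    intervalIntegrable_const (ae_of_all _ fun t _ => hasSum_exp_mul_integral t)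
  have hterm : (fun n : ℕ =>
      (2 : ℝ) ^ n * x ^ (2 * n + 2) / ((Nat.doubleFactorial (2 * n + 1) : ℝ) * (n + 1)))
      = fun n => 2 * ∫ t in (0 : ℝ)..x, coeff n * t ^ (2 * n + 1) := by
    funext n
    rw [intervalIntegral.integral_const_mul, integral_pow, coeff]
    push_cast
    field_simp
    ring
  rw [hterm]
  exact htermwise.mul_left 2

end Psi1

theorem psi1_even_and_series (x : ℝ) :
    psi1 (-x) = psi1 x ∧
    HasSum (fun n : ℕ =>
        (2 : ℝ) ^ n * x ^ (2 * n + 2) / ((Nat.doubleFactorial (2 * n + 1) : ℝ) * (n + 1)))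
      (psi1 x) := by
  have hneg := Psi1.hasSum_psi1 (-x)
  have heven (n : ℕ) : (-x) ^ (2 * n + 2) = x ^ (2 * n + 2) := Even.neg_pow ⟨n + 1, by ring⟩ x
  simp only [heven] at hneg
  exact ⟨hneg.unique (Psi1.hasSum_psi1 x), Psi1.hasSum_psi1 x⟩
end

section
/- The integral I := ∫_{-∞}^0 e^{-u₂²} (∫₀^{u₂} e^{t₁²} (∫_{-∞}^{t₁} e^{-u₁²} du₁) dt₁) du₂ equals -(√π/4)·ln 2. -/
/-!
Write `G(s) = ∫_s^∞ e^{-u²} du`, so that the innermost integral is `G(-t)`. Reflecting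
`u ↦ -u`, the integral becomes `-∫_0^∞ e^{-s²} N(s) ds` with
`N(s) = ∫_0^s e^{r²} G(r) dr`. Since `N' = e^{s²} G` and `G' = -e^{-s²}`, integrating by
parts against `G` turns this into `-∫_0^∞ e^{s²} G(s)² ds`; the boundary terms vanish
because `e^{s²} G(s) ≤ √π / 2`. The substitution `u = s x` gives
`G(s) = s ∫_1^∞ e^{-s²x²} dx`, so by Tonelli
`∫_0^∞ e^{s²} G(s)² ds = ∫_1^∞ ∫_1^∞ ∫_0^∞ s² e^{-(x²+y²-1) s²} ds dy dx`
`  = √π / 4 ∫_1^∞ ∫_1^∞ (x²+y²-1)^{-3/2} dy dx = √π / 4 ∫_1^∞ dx / (x (x+1))`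
`  = √π / 4 · log 2`.
-/

open Real MeasureTheory intervalIntegral

open Set Filter Topology

theorem integral_Ioi_comp_add_right {E : Type*} [NormedAddCommGroup E] [NormedSpace ℝ E]
    (f : ℝ → E) (a b : ℝ) : ∫ t in Ioi a, f (t + b) = ∫ u in Ioi (a + b), f u := by
  have h := (measurePreserving_add_right volume b).setIntegral_preimage_emb
    (measurableEmbedding_addRight b) f (Ioi (a + b))
  rwa [preimage_add_const_Ioi, add_sub_cancel_right] at h

theorem hasDerivAt_integral_Ioi {E : Type*} [NormedAddCommGroup E] [NormedSpace ℝ E]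
    [CompleteSpace E]
    {f : ℝ → E} (hf : Integrable f) (hc : Continuous f) (s : ℝ) :
    HasDerivAt (fun t ↦ ∫ x in Ioi t, f x) (-f s) s := by
  have h : ∀ t, ∫ x in Ioi t, f x = (∫ x in Ioi 0, f x) - ∫ x in 0..t, f x := fun t ↦ by
    rw [← integral_Ioi_sub_Ioi' hf.integrableOn hf.integrableOn, sub_sub_cancel]
  rw [funext h]
  exact (hc.integral_hasStrictDerivAt 0 s).hasDerivAt.const_sub _

theorem lintegral_Ioi_ofReal_deriv_of_nonneg {g g' : ℝ → ℝ} {a l : ℝ}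
    (hcont : ContinuousWithinAt g (Ici a) a) (hderiv : ∀ x ∈ Ioi a, HasDerivAt g (g' x) x)
    (g'pos : ∀ x ∈ Ioi a, 0 ≤ g' x) (hg : Tendsto g atTop (𝓝 l)) :
    ∫⁻ x in Ioi a, ENNReal.ofReal (g' x) = ENNReal.ofReal (l - g a) := by
  rw [← integral_Ioi_of_hasDerivAt_of_nonneg hcont hderiv g'pos hg,
    ofReal_integral_eq_lintegral_ofReal (integrableOn_Ioi_deriv_of_nonneg hcont hderiv g'pos hg)
      ((ae_restrict_mem measurableSet_Ioi).mono g'pos)]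

theorem integrable_exp_neg_sq : Integrable fun u : ℝ ↦ exp (-u ^ 2) := by
  simpa using integrable_exp_neg_mul_sq one_pos

theorem integral_sq_mul_exp_neg_mul_sq {c : ℝ} (hc : 0 < c) :
    ∫ s in Ioi 0, s ^ 2 * exp (-c * s ^ 2) = √π / 4 * (c * √c)⁻¹ := by
  have h := integral_rpow_mul_exp_neg_mul_rpow two_pos (by norm_num : (-1 : ℝ) < 2) hc
  simp only [rpow_two] at h
  have hGamma : Gamma ((2 + 1) / 2) = √π / 2 := by
    rw [show (2 + 1) / 2 = (1 / 2 : ℝ) + 1 by norm_num, Gamma_add_one (by norm_num),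
      Gamma_one_half_eq]
    ring
  have hpow : c ^ (-(2 + 1) / 2 : ℝ) = (c * √c)⁻¹ := by
    rw [show (-(2 + 1) / 2 : ℝ) = -(1 + 1 / 2) by norm_num, rpow_neg hc.le, rpow_add hc,
      rpow_one, sqrt_eq_rpow]
  rw [h, hGamma, hpow]
  ring

theorem lintegral_Ioi_one_inv_mul_sqrt {x : ℝ} (hx : 1 < x) :
    ∫⁻ y in Ioi 1, ENNReal.ofReal ((x ^ 2 + y ^ 2 - 1) * √(x ^ 2 + y ^ 2 - 1))⁻¹ =
      ENNReal.ofReal (x * (x + 1))⁻¹ := by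
  have hd : 0 < x ^ 2 - 1 := by nlinarith
  have hderiv (y : ℝ) : HasDerivAt (fun y ↦ y / ((x ^ 2 - 1) * √(x ^ 2 + y ^ 2 - 1)))
      ((x ^ 2 + y ^ 2 - 1) * √(x ^ 2 + y ^ 2 - 1))⁻¹ y := by
    have hc : 0 < x ^ 2 + y ^ 2 - 1 := by nlinarith [sq_nonneg y]
    have hsqrt := ((((hasDerivAt_pow 2 y).const_add (x ^ 2)).sub_const 1).sqrt hc.ne').const_mul
      (x ^ 2 - 1)
    refine ((hasDerivAt_id y).div hsqrt (by positivity)).congr_deriv ?_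
    have hr := sq_sqrt hc.le
    simp only [id, Nat.cast_ofNat, pow_one, Nat.add_one_sub_one]
    field_simp
    rw [hr]
    ring
  have hlim : Tendsto (fun y ↦ y / ((x ^ 2 - 1) * √(x ^ 2 + y ^ 2 - 1))) atTop
      (𝓝 (x ^ 2 - 1)⁻¹) := by
    have h0 : Tendsto (fun y ↦ (x ^ 2 - 1) / (x ^ 2 + y ^ 2 - 1)) atTop (𝓝 0) :=
      tendsto_const_nhds.div_atTop <| tendsto_atTop_mono (fun y ↦ by linarith)
        (tendsto_pow_atTop two_ne_zero)
    have h1 := ((tendsto_const_nhds (x := (1 : ℝ))).sub h0).sqrt.const_mul (x ^ 2 - 1)⁻¹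
    rw [sub_zero, sqrt_one, mul_one] at h1
    refine h1.congr' ((eventually_gt_atTop 0).mono fun y hy ↦ ?_)
    have hc : 0 < x ^ 2 + y ^ 2 - 1 := by nlinarith [sq_nonneg y]
    rw [one_sub_div hc.ne', show x ^ 2 + y ^ 2 - 1 - (x ^ 2 - 1) = y ^ 2 by ring,
      sqrt_div' _ hc.le, sqrt_sq hy.le]
    field_simp
  rw [lintegral_Ioi_ofReal_deriv_of_nonneg (hderiv 1).continuousAt.continuousWithinAt
    (fun y _ ↦ hderiv y)
    (fun y _ ↦ inv_nonneg.2 (mul_nonneg (by nlinarith [sq_nonneg y]) (sqrt_nonneg _))) hlim]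
  rw [show x ^ 2 + 1 ^ 2 - 1 = x ^ 2 by ring, sqrt_sq (by linarith)]
  congr 1
  field_simp
  ring

theorem lintegral_Ioi_one_inv_mul_add_one :
    ∫⁻ x in Ioi 1, ENNReal.ofReal (x * (x + 1))⁻¹ = ENNReal.ofReal (log 2) := by
  have hderiv : ∀ x ∈ Ioi (1 : ℝ),
      HasDerivAt (fun x ↦ log x - log (x + 1)) (x * (x + 1))⁻¹ x := fun x hx ↦ by
    have hx : (0 : ℝ) < x := one_pos.trans hx
    refine (((hasDerivAt_id x).log hx.ne').sub
      (((hasDerivAt_id x).add_const 1).log (by positivity))).congr_deriv ?_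
    simp only [id]
    field_simp
    ring
  have hlim : Tendsto (fun x ↦ log x - log (x + 1)) atTop (𝓝 0) := by
    simpa using (tendsto_log_comp_add_sub_log 1).neg
  rw [lintegral_Ioi_ofReal_deriv_of_nonneg
    (by fun_prop (disch := norm_num) : ContinuousAt _ _).continuousWithinAt hderiv
    (fun x hx ↦ by have : (0 : ℝ) < x := one_pos.trans hx; positivity) hlim]
  norm_num

noncomputable def gaussTail (s : ℝ) : ℝ := ∫ u in Ioi s, exp (-u ^ 2)

theorem gaussTail_zero : gaussTail 0 = √π / 2 := by
  rw [gaussTail]; simpa using integral_gaussian_Ioi 1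

theorem hasDerivAt_gaussTail (s : ℝ) : HasDerivAt gaussTail (-exp (-s ^ 2)) s :=
  hasDerivAt_integral_Ioi integrable_exp_neg_sq (by fun_prop) s

@[fun_prop]
theorem continuous_gaussTail : Continuous gaussTail :=
  continuous_iff_continuousAt.2 fun s ↦ (hasDerivAt_gaussTail s).continuousAt

theorem gaussTail_nonneg (s : ℝ) : 0 ≤ gaussTail s :=
  setIntegral_nonneg measurableSet_Ioi fun _ _ ↦ (exp_pos _).le

theorem gaussTail_le {s : ℝ} (hs : 0 ≤ s) : gaussTail s ≤ √π / 2 * exp (-s ^ 2) := by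
  calc gaussTail s = ∫ t in Ioi 0, exp (-(t + s) ^ 2) := by
        rw [integral_Ioi_comp_add_right (fun u ↦ exp (-u ^ 2)), zero_add, gaussTail]
    _ ≤ ∫ t in Ioi 0, exp (-s ^ 2) * exp (-t ^ 2) := by
        refine setIntegral_mono_on ?_ (integrable_exp_neg_sq.const_mul _).integrableOn
          measurableSet_Ioi fun t ht ↦ ?_
        · exact (integrable_exp_neg_sq.comp_add_right s).integrableOn
        · rw [← exp_add, exp_le_exp]
          nlinarith [mul_nonneg hs (le_of_lt ht)]
    _ = √π / 2 * exp (-s ^ 2) := by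
        rw [MeasureTheory.integral_const_mul, ← gaussTail, gaussTail_zero, mul_comm]

theorem exp_sq_mul_gaussTail_le {s : ℝ} (hs : 0 ≤ s) :
    exp (s ^ 2) * gaussTail s ≤ √π / 2 := by
  calc exp (s ^ 2) * gaussTail s ≤ exp (s ^ 2) * (√π / 2 * exp (-s ^ 2)) := by
        gcongr; exact gaussTail_le hs
    _ = √π / 2 := by rw [mul_left_comm, ← exp_add]; simp

theorem integral_Iio_exp_neg_sq (t : ℝ) : ∫ u in Iio t, exp (-u ^ 2) = gaussTail (-t) := by
  rw [gaussTail, ← integral_comp_neg_Iic, ← integral_Iic_eq_integral_Iio]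
  simp only [neg_sq]

theorem abs_integral_exp_sq_mul_gaussTail_le {s : ℝ} (hs : 0 ≤ s) :
    |∫ r in 0..s, exp (r ^ 2) * gaussTail r| ≤ √π / 2 * s := by
  have h := norm_integral_le_of_norm_le_const (a := 0) (b := s) (C := √π / 2)
    (f := fun r ↦ exp (r ^ 2) * gaussTail r) fun r hr ↦ by
      rw [uIoc_of_le hs] at hr
      rw [norm_of_nonneg (mul_nonneg (exp_pos _).le (gaussTail_nonneg r))]
      exact exp_sq_mul_gaussTail_le hr.1.le
  rwa [norm_eq_abs, sub_zero, abs_of_nonneg hs] at h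

theorem exp_sq_mul_gaussTail_sq_le {s : ℝ} (hs : 0 ≤ s) :
    exp (s ^ 2) * gaussTail s ^ 2 ≤ √π / 2 * √π / 2 * exp (-s ^ 2) := by
  calc exp (s ^ 2) * gaussTail s ^ 2 = (exp (s ^ 2) * gaussTail s) * gaussTail s := by ring
    _ ≤ √π / 2 * (√π / 2 * exp (-s ^ 2)) :=
        mul_le_mul (exp_sq_mul_gaussTail_le hs) (gaussTail_le hs) (gaussTail_nonneg s)
          (by positivity)
    _ = √π / 2 * √π / 2 * exp (-s ^ 2) := by ring

theorem integrableOn_exp_sq_mul_gaussTail_sq :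
    IntegrableOn (fun s ↦ exp (s ^ 2) * gaussTail s ^ 2) (Ioi 0) := by
  refine Integrable.mono' (integrable_exp_neg_sq.const_mul (√π / 2 * √π / 2)).integrableOn
    (by fun_prop : Continuous _).aestronglyMeasurable ?_
  filter_upwards [ae_restrict_mem measurableSet_Ioi] with s hs
  rw [norm_of_nonneg (by positivity)]
  exact exp_sq_mul_gaussTail_sq_le (le_of_lt hs)

theorem integrableOn_exp_neg_sq_mul_integral_exp_sq_mul_gaussTail :
    IntegrableOn (fun s ↦ exp (-s ^ 2) * ∫ r in 0..s, exp (r ^ 2) * gaussTail r) (Ioi 0) := by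
  have hc : Continuous fun s ↦ ∫ r in 0..s, exp (r ^ 2) * gaussTail r :=
    continuous_primitive (fun _ _ ↦ (by fun_prop : Continuous _).intervalIntegrable _ _) 0
  refine Integrable.mono'
    ((integrable_mul_exp_neg_mul_sq one_pos).const_mul (√π / 2)).integrableOn
    (by fun_prop : Continuous _).aestronglyMeasurable ?_
  filter_upwards [ae_restrict_mem measurableSet_Ioi] with s hs
  rw [norm_mul, norm_of_nonneg (exp_pos _).le, norm_eq_abs]
  calc exp (-s ^ 2) * |∫ r in 0..s, exp (r ^ 2) * gaussTail r|
      ≤ exp (-s ^ 2) * (√π / 2 * s) := by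
        gcongr; exact abs_integral_exp_sq_mul_gaussTail_le (le_of_lt hs)
    _ = √π / 2 * (s * exp (-1 * s ^ 2)) := by ring_nf

theorem tendsto_gaussTail_mul_integral_exp_sq_mul_gaussTail :
    Tendsto (fun s ↦ gaussTail s * ∫ r in 0..s, exp (r ^ 2) * gaussTail r) atTop (𝓝 0) := by
  have hlim :
      Tendsto (fun s : ℝ ↦ √π / 2 * √π / 2 * (s * exp (-s ^ 2))) atTop (𝓝 0) := by
    have h := (tendsto_rpow_abs_mul_exp_neg_mul_sq_cocompact one_pos 1).mono_left
      atTop_le_cocompact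
    simpa using (h.const_mul (√π / 2 * √π / 2)).congr' <|
      (eventually_ge_atTop 0).mono fun s hs ↦ by simp [abs_of_nonneg hs]
  refine squeeze_zero_norm' ?_ hlim
  filter_upwards [eventually_ge_atTop 0] with s hs
  rw [norm_mul, norm_of_nonneg (gaussTail_nonneg s), norm_eq_abs]
  calc gaussTail s * |∫ r in 0..s, exp (r ^ 2) * gaussTail r|
      ≤ √π / 2 * exp (-s ^ 2) * (√π / 2 * s) :=
        mul_le_mul (gaussTail_le hs) (abs_integral_exp_sq_mul_gaussTail_le hs) (abs_nonneg _)
          (by positivity)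
    _ = √π / 2 * √π / 2 * (s * exp (-s ^ 2)) := by ring

theorem integral_exp_neg_sq_mul_integral_exp_sq_mul_gaussTail :
    ∫ s in Ioi 0, exp (-s ^ 2) * (∫ r in 0..s, exp (r ^ 2) * gaussTail r) =
      ∫ s in Ioi 0, exp (s ^ 2) * gaussTail s ^ 2 := by
  have hderiv (s : ℝ) :
      HasDerivAt (fun s ↦ -(gaussTail s * ∫ r in 0..s, exp (r ^ 2) * gaussTail r))
        (exp (-s ^ 2) * (∫ r in 0..s, exp (r ^ 2) * gaussTail r) -
          exp (s ^ 2) * gaussTail s ^ 2) s :=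
    ((hasDerivAt_gaussTail s).mul
      ((by fun_prop : Continuous fun r ↦ exp (r ^ 2) * gaussTail r).integral_hasStrictDerivAt
        0 s).hasDerivAt).neg.congr_deriv (by ring)
  have h := integral_Ioi_of_hasDerivAt_of_tendsto (hderiv 0).continuousAt.continuousWithinAt
    (fun s _ ↦ hderiv s) (integrableOn_exp_neg_sq_mul_integral_exp_sq_mul_gaussTail.sub
      integrableOn_exp_sq_mul_gaussTail_sq)
    tendsto_gaussTail_mul_integral_exp_sq_mul_gaussTail.neg
  rw [integral_sub integrableOn_exp_neg_sq_mul_integral_exp_sq_mul_gaussTail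
    integrableOn_exp_sq_mul_gaussTail_sq] at h
  simp only [integral_same, mul_zero, neg_zero, sub_zero] at h
  exact sub_eq_zero.1 h

theorem gaussTail_eq_mul_integral_Ioi_one {s : ℝ} (hs : 0 < s) :
    gaussTail s = s * ∫ x in Ioi 1, exp (-(s * x) ^ 2) := by
  rw [integral_comp_mul_left_Ioi (fun u ↦ exp (-u ^ 2)) 1 hs, mul_one, smul_eq_mul,
    mul_inv_cancel_left₀ hs.ne', gaussTail]

theorem ofReal_exp_sq_mul_gaussTail_sq {s : ℝ} (hs : 0 < s) :
    ENNReal.ofReal (exp (s ^ 2) * gaussTail s ^ 2) =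
      ∫⁻ x in Ioi 1, ∫⁻ y in Ioi 1,
        ENNReal.ofReal (s ^ 2 * exp (-(x ^ 2 + y ^ 2 - 1) * s ^ 2)) := by
  have hint : IntegrableOn (fun x ↦ exp (-(s * x) ^ 2)) (Ioi 1) := by
    simpa only [mul_pow, neg_mul] using
      (integrable_exp_neg_mul_sq (pow_pos hs 2)).integrableOn (s := Ioi 1)
  have htail : ∫⁻ x in Ioi 1, ENNReal.ofReal (exp (-(s * x) ^ 2)) =
      ENNReal.ofReal (gaussTail s / s) := by
    rw [← ofReal_integral_eq_lintegral_ofReal hint (ae_of_all _ fun _ ↦ (exp_pos _).le),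
      gaussTail_eq_mul_integral_Ioi_one hs, mul_div_cancel_left₀ _ hs.ne']
  have hsplit (x y : ℝ) : ENNReal.ofReal (s ^ 2 * exp (-(x ^ 2 + y ^ 2 - 1) * s ^ 2)) =
      ENNReal.ofReal (s ^ 2 * exp (s ^ 2)) * ENNReal.ofReal (exp (-(s * x) ^ 2)) *
        ENNReal.ofReal (exp (-(s * y) ^ 2)) := by
    rw [← ENNReal.ofReal_mul (by positivity), ← ENNReal.ofReal_mul (by positivity), mul_assoc,
      mul_assoc, ← exp_add, ← exp_add]
    ring_nf
  simp_rw [hsplit, lintegral_const_mul' _ _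
    (ENNReal.mul_ne_top ENNReal.ofReal_ne_top ENNReal.ofReal_ne_top), htail]
  rw [lintegral_mul_const' _ _ ENNReal.ofReal_ne_top,
    lintegral_const_mul' _ _ ENNReal.ofReal_ne_top, htail]
  have := div_nonneg (gaussTail_nonneg s) hs.le
  rw [← ENNReal.ofReal_mul (by positivity), ← ENNReal.ofReal_mul (by positivity)]
  congr 1
  field_simp

theorem integral_exp_sq_mul_gaussTail_sq :
    ∫ s in Ioi 0, exp (s ^ 2) * gaussTail s ^ 2 = √π / 4 * log 2 := by
  -- In `ℝ≥0∞`, Tonelli reorders the integrals without integrability side conditions.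
  suffices ∫⁻ s in Ioi 0, ENNReal.ofReal (exp (s ^ 2) * gaussTail s ^ 2) =
      ENNReal.ofReal (√π / 4 * log 2) by
    rw [integral_eq_lintegral_of_nonneg_ae (ae_of_all _ fun s ↦ by positivity)
      (by fun_prop : Continuous _).aestronglyMeasurable, this,
      ENNReal.toReal_ofReal (by positivity)]
  calc ∫⁻ s in Ioi 0, ENNReal.ofReal (exp (s ^ 2) * gaussTail s ^ 2)
      = ∫⁻ s in Ioi 0, ∫⁻ x in Ioi 1, ∫⁻ y in Ioi 1,
          ENNReal.ofReal (s ^ 2 * exp (-(x ^ 2 + y ^ 2 - 1) * s ^ 2)) :=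
        setLIntegral_congr_fun measurableSet_Ioi fun s hs ↦ ofReal_exp_sq_mul_gaussTail_sq hs
    _ = ∫⁻ x in Ioi 1, ∫⁻ y in Ioi 1, ∫⁻ s in Ioi 0,
          ENNReal.ofReal (s ^ 2 * exp (-(x ^ 2 + y ^ 2 - 1) * s ^ 2)) := by
        rw [lintegral_lintegral_swap (Measurable.lintegral_prod_right'
          (f := fun q : (ℝ × ℝ) × ℝ ↦
            ENNReal.ofReal (q.1.1 ^ 2 * exp (-(q.1.2 ^ 2 + q.2 ^ 2 - 1) * q.1.1 ^ 2)))
          (by fun_prop)).aemeasurable]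
        exact lintegral_congr fun x ↦ lintegral_lintegral_swap (by fun_prop)
    _ = ∫⁻ x in Ioi 1, ∫⁻ y in Ioi 1, ENNReal.ofReal (√π / 4) *
          ENNReal.ofReal ((x ^ 2 + y ^ 2 - 1) * √(x ^ 2 + y ^ 2 - 1))⁻¹ := by
        refine setLIntegral_congr_fun measurableSet_Ioi fun x hx ↦
          setLIntegral_congr_fun measurableSet_Ioi fun y hy ↦ ?_
        have hc : 0 < x ^ 2 + y ^ 2 - 1 := by nlinarith [mem_Ioi.1 hx, mem_Ioi.1 hy]
        have hint :
            IntegrableOn (fun s ↦ s ^ 2 * exp (-(x ^ 2 + y ^ 2 - 1) * s ^ 2)) (Ioi 0) := by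
          simpa using integrableOn_rpow_mul_exp_neg_mul_sq hc (by norm_num : (-1 : ℝ) < 2)
        rw [← ofReal_integral_eq_lintegral_ofReal hint (ae_of_all _ fun s ↦ by positivity),
          integral_sq_mul_exp_neg_mul_sq hc,
          ENNReal.ofReal_mul (by positivity)]
    _ = ENNReal.ofReal (√π / 4) * ∫⁻ x in Ioi 1, ENNReal.ofReal (x * (x + 1))⁻¹ := by
        rw [← lintegral_const_mul' _ _ ENNReal.ofReal_ne_top]
        refine setLIntegral_congr_fun measurableSet_Ioi fun x hx ↦ ?_
        rw [lintegral_const_mul' _ _ ENNReal.ofReal_ne_top, lintegral_Ioi_one_inv_mul_sqrt hx]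
    _ = ENNReal.ofReal (√π / 4 * log 2) := by
        rw [lintegral_Ioi_one_inv_mul_add_one, ← ENNReal.ofReal_mul (by positivity)]

theorem triple_integral_eq_neg_sqrt_pi_div_four_mul_log_two :
    (∫ u₂ in Set.Iio (0 : ℝ),
        Real.exp (-u₂ ^ 2) *
          ∫ t₁ in (0 : ℝ)..u₂,
            Real.exp (t₁ ^ 2) * ∫ u₁ in Set.Iio t₁, Real.exp (-u₁ ^ 2))
      = -(Real.sqrt π / 4) * Real.log 2 := by
  have hinner (v : ℝ) : ∫ t in (0 : ℝ)..v, exp (t ^ 2) * ∫ u in Iio t, exp (-u ^ 2) =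
      -∫ r in (0 : ℝ)..(-v), exp (r ^ 2) * gaussTail r := by
    have h := intervalIntegral.integral_comp_neg (a := 0) (b := v)
      fun r ↦ exp (r ^ 2) * gaussTail r
    simp only [neg_sq, neg_zero] at h
    simp_rw [integral_Iio_exp_neg_sq, h, integral_symm (-v), neg_neg]
  have hreflect := integral_comp_neg_Iic 0
    fun s ↦ exp (-s ^ 2) * ∫ r in (0 : ℝ)..s, exp (r ^ 2) * gaussTail r
  simp only [neg_sq, neg_zero] at hreflect
  simp_rw [hinner, mul_neg, MeasureTheory.integral_neg]
  rw [← integral_Iic_eq_integral_Iio, hreflect,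
    integral_exp_neg_sq_mul_integral_exp_sq_mul_gaussTail, integral_exp_sq_mul_gaussTail_sq]
  ring
end

section
/- Let v⁺ = e^{U-D-c} - 1 and v⁻ = e^{L-D-c} - 1 with L < D < U and c > 0. Then the condition p⁺ > q⁺ := v⁻/(v⁻ - v⁺) (for p⁺ ∈ (0,1), assuming U - D > c so v⁺ > 0 and v⁻ < 0) is equivalent to c < ln(1 + p⁺·(e^{U-L} - 1)) - (D - L). -/
theorem max_transaction_cost_equiv (L D U c pp : ℝ) (hLD : L < D) (hDU : D < U)
    (hc : 0 < c) (hcU : c < U - D) (hpp : pp ∈ Set.Ioo (0 : ℝ) 1)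
    (vp vm : ℝ) (hvp : vp = Real.exp (U - D - c) - 1) (hvm : vm = Real.exp (L - D - c) - 1) :
    vm / (vm - vp) < pp ↔ c < Real.log (1 + pp * (Real.exp (U - L) - 1)) - (D - L) := by
  obtain ⟨hp0, hp1⟩ := hpp
  have hUL : (1:ℝ) < Real.exp (U - L) := by rw [show (1:ℝ) = Real.exp 0 from (Real.exp_zero).symm]; exact Real.exp_lt_exp.mpr (by linarith)
  have hApos : 0 < 1 + pp * (Real.exp (U - L) - 1) := by nlinarith
  have e1 : Real.exp (L - D - c) * Real.exp (D + c) = Real.exp L := by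
    rw [← Real.exp_add]; ring_nf
  have e2 : Real.exp (U - D - c) * Real.exp (D + c) = Real.exp U := by
    rw [← Real.exp_add]; ring_nf
  have e3 : Real.exp (U - L) * Real.exp L = Real.exp U := by
    rw [← Real.exp_add]; ring_nf
  have hvmneg : vm < 0 := by
    rw [hvm]; have : Real.exp (L - D - c) < 1 := Real.exp_lt_one_iff.mpr (by linarith)
    linarith
  have hvppos : 0 < vp := by
    rw [hvp]; have : 1 < Real.exp (U - D - c) := by rw [show (1:ℝ) = Real.exp 0 from (Real.exp_zero).symm]; exact Real.exp_lt_exp.mpr (by linarith)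
    linarith
  have hneg : vm - vp < 0 := by linarith
  have hE : 0 < Real.exp (D + c) := Real.exp_pos _
  have hL : 0 < Real.exp L := Real.exp_pos _
  rw [div_lt_iff_of_neg hneg, lt_sub_iff_add_lt, ← Real.exp_lt_exp (x := c + (D - L)),
    Real.exp_log hApos]
  constructor
  · intro h
    have h' : Real.exp (D + c) < Real.exp L + pp * (Real.exp U - Real.exp L) := by
      rw [hvm, hvp] at h
      nlinarith [mul_lt_mul_of_pos_right h hE]
    have : Real.exp (c + (D - L)) * Real.exp L = Real.exp (D + c) := by
      rw [← Real.exp_add]; ring_nf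
    nlinarith
  · intro h
    have h' : Real.exp (D + c) < Real.exp L + pp * (Real.exp U - Real.exp L) := by
      have : Real.exp (c + (D - L)) * Real.exp L = Real.exp (D + c) := by
        rw [← Real.exp_add]; ring_nf
      nlinarith
    rw [hvm, hvp]
    have := mul_lt_mul_of_pos_right h' (Real.exp_pos (-(D + c)))
    have einv : Real.exp (D + c) * Real.exp (-(D + c)) = 1 := by
      rw [← Real.exp_add, show D + c + -(D + c) = 0 by ring, Real.exp_zero]
    have einvL : Real.exp L * Real.exp (-(D + c)) = Real.exp (L - D - c) := by
      rw [← Real.exp_add]; ring_nf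
    have einvU : Real.exp U * Real.exp (-(D + c)) = Real.exp (U - D - c) := by
      rw [← Real.exp_add]; ring_nf
    nlinarith
end

section
/- Define ψ₂(x) := 4·∫₀ˣ e^{t₂²} ∫₀^{t₂} e^{-u₂²} ∫₀^{u₂} e^{t₁²} ∫₀^{t₁} e^{-u₁²} du₁ dt₁ du₂ dt₂. Then ψ₂ is an even function and ψ₂(x) = Σ_{n=0}^∞ (2ⁿ · x^{2n+4} / ((2n+3)!! · (n+2))) · Σ_{k=0}^n 1/(k+1) for all real x. -/
/-!
The functions `e^{t²} ∫₀ᵗ e^{-u²} F(u) du` are the solutions of `y' = 2 t y + F` with `y(0) = 0`.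
For `F(t) = Σ bₙ t^(2n+r)` an entire series, comparing coefficients shows that the solution is
the entire series `Σ qₙ t^(2n+r+1)` with `(2n+r+1) qₙ = bₙ + 2 qₙ₋₁`. Starting from `F = 1`, this
gives `e^{t²} ∫₀ᵗ e^{-u²} = Σ 2ⁿ t^(2n+1) / (2n+1)‼`; integrating termwise and applying the
recurrence once more gives `2ⁿ Hₙ₊₁ / (2 (2n+3)‼)` with `Hₙ₊₁ = Σ_{k ≤ n} 1/(k+1)`, and a last
termwise integration gives the series of `ψ₂`. It only has even powers, so `ψ₂` is even.
-/

open Real intervalIntegral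

noncomputable def psi2 (x : ℝ) : ℝ :=
  4 * ∫ t₂ in (0 : ℝ)..x, Real.exp (t₂ ^ 2) *
        ∫ u₂ in (0 : ℝ)..t₂, Real.exp (-u₂ ^ 2) *
          ∫ t₁ in (0 : ℝ)..u₂, Real.exp (t₁ ^ 2) *
            ∫ u₁ in (0 : ℝ)..t₁, Real.exp (-u₁ ^ 2)

open Finset
open scoped Nat

-- `Σ cₙ sⁿ` converges absolutely for every `s`; it is used for the series `Σ cₙ t^(2n+r)`, `s = t²`.
def EntireCoeffs (c : ℕ → ℝ) : Prop := ∀ R : ℝ, Summable fun n => |c n| * R ^ n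

namespace EntireCoeffs

variable {c d : ℕ → ℝ}

theorem of_abs_le_inv_factorial (hc : ∀ n, |c n| ≤ (n ! : ℝ)⁻¹) : EntireCoeffs c :=
  fun R => (Real.summable_pow_div_factorial |R|).of_norm_bounded fun n => by
    rw [Real.norm_eq_abs, abs_mul, abs_abs, abs_pow, div_eq_inv_mul]
    exact mul_le_mul_of_nonneg_right (hc n) (by positivity)

theorem mono (hc : EntireCoeffs c) (h : ∀ n, |d n| ≤ |c n|) : EntireCoeffs d :=
  fun R => (hc |R|).of_norm_bounded fun n => by
    rw [Real.norm_eq_abs, abs_mul, abs_abs, abs_pow]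
    exact mul_le_mul_of_nonneg_right (h n) (by positivity)

theorem summable_abs_mul_pow (hc : EntireCoeffs c) (r : ℕ) (R : ℝ) :
    Summable fun n => |c n| * R ^ (2 * n + r) :=
  ((hc (R ^ 2)).mul_left (R ^ r)).congr fun n => by ring

theorem summable_mul_pow (hc : EntireCoeffs c) (r : ℕ) (t : ℝ) :
    Summable fun n => c n * t ^ (2 * n + r) :=
  .of_norm <| (hc.summable_abs_mul_pow r |t|).congr fun n => by
    rw [Real.norm_eq_abs, abs_mul, abs_pow]

theorem linear_mul (hc : EntireCoeffs c) (r : ℕ) :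
    EntireCoeffs fun n => (2 * n + r + 1 : ℝ) * c n := by
  intro R
  refine ((hc (2 * |R|)).mul_left (r + 2 : ℝ)).of_norm_bounded fun n => ?_
  have hlin : (2 * n + r + 1 : ℝ) ≤ (r + 2) * 2 ^ n := by
    have h : (n : ℝ) + 1 ≤ 2 ^ n := by exact_mod_cast Nat.lt_two_pow_self
    nlinarith [one_le_pow₀ (n := n) (by norm_num : (1 : ℝ) ≤ 2), (r.cast_nonneg : (0 : ℝ) ≤ r)]
  rw [Real.norm_eq_abs, abs_mul, abs_abs, abs_mul, abs_pow, mul_pow,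
    abs_of_nonneg (by positivity : (0 : ℝ) ≤ 2 * n + r + 1)]
  calc (2 * n + r + 1 : ℝ) * |c n| * |R| ^ n ≤ (r + 2) * 2 ^ n * |c n| * |R| ^ n := by gcongr
    _ = _ := by ring

end EntireCoeffs

theorem continuous_of_hasSum_mul_pow {c : ℕ → ℝ} {r : ℕ} {F : ℝ → ℝ}
    (hF : ∀ t, HasSum (fun n => c n * t ^ (2 * n + r)) (F t)) (hc : EntireCoeffs c) :
    Continuous F := by
  have hF' : F = fun t => ∑' n, c n * t ^ (2 * n + r) := funext fun t => (hF t).tsum_eq.symm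
  rw [hF', continuous_iff_continuousAt]
  intro t
  have hcont : ContinuousOn (fun t => ∑' n, c n * t ^ (2 * n + r))
      (Set.Icc (-(|t| + 1)) (|t| + 1)) :=
    continuousOn_tsum (fun n => (continuous_const.mul (continuous_pow _)).continuousOn)
      (hc.summable_abs_mul_pow r (|t| + 1)) fun n s hs => by
        rw [Real.norm_eq_abs, abs_mul, abs_pow]
        gcongr
        exact abs_le.2 hs
  exact hcont.continuousAt (Icc_mem_nhds (by linarith [abs_nonneg t, neg_abs_le t])
    (by linarith [le_abs_self t]))

theorem hasSum_integral_of_hasSum_mul_pow {c : ℕ → ℝ} {r : ℕ} {F : ℝ → ℝ}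
    (hF : ∀ t, HasSum (fun n => c n * t ^ (2 * n + r)) (F t)) (hc : EntireCoeffs c) (x : ℝ) :
    HasSum (fun n => c n / (2 * n + r + 1) * x ^ (2 * n + r + 1)) (∫ t in (0 : ℝ)..x, F t) := by
  have hterm : HasSum (fun n => ∫ t in (0 : ℝ)..x, c n * t ^ (2 * n + r))
      (∫ t in (0 : ℝ)..x, F t) := by
    refine intervalIntegral.hasSum_integral_of_dominated_convergence
      (fun n _ => |c n| * |x| ^ (2 * n + r))
      (fun n => (continuous_const.mul (continuous_pow _)).aestronglyMeasurable)
      (fun n => MeasureTheory.ae_of_all _ fun t ht => ?_)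
      (MeasureTheory.ae_of_all _ fun _ _ => hc.summable_abs_mul_pow r |x|)
      intervalIntegrable_const (MeasureTheory.ae_of_all _ fun t _ => hF t)
    have htx : |t| ≤ |x| := by
      simpa using Set.abs_sub_left_of_mem_uIcc (Set.uIoc_subset_uIcc ht)
    rw [Real.norm_eq_abs, abs_mul, abs_pow]
    gcongr
  refine hterm.congr_fun fun n => ?_
  rw [intervalIntegral.integral_const_mul, integral_pow]
  push_cast
  ring

theorem hasDerivAt_of_hasSum_of_recurrence {b q : ℕ → ℝ} {r : ℕ} {F S : ℝ → ℝ}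
    (hF : ∀ t, HasSum (fun n => b n * t ^ (2 * n + r)) (F t))
    (hS : ∀ t, HasSum (fun n => q n * t ^ (2 * n + r + 1)) (S t))
    (hq : EntireCoeffs q) (hq_zero : (r + 1 : ℝ) * q 0 = b 0)
    (hq_succ : ∀ n : ℕ, (2 * n + r + 3 : ℝ) * q (n + 1) = b (n + 1) + 2 * q n) (t : ℝ) :
    HasDerivAt S (F t + 2 * t * S t) t := by
  set p : ℕ → ℝ := fun n => (2 * n + r + 1 : ℝ) * q n
  have hp : EntireCoeffs p := hq.linear_mul r
  -- The recurrence says that the `pₙ`, the coefficients of `S'`, are those of `F + 2 t S`.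
  have hG : ∀ t, HasSum (fun n => p n * t ^ (2 * n + r)) (F t + 2 * t * S t) := by
    intro t
    rw [← hasSum_nat_add_iff' 1]
    have hF' := (hasSum_nat_add_iff' 1).2 (hF t)
    convert hF'.add ((hS t).mul_left (2 * t)) using 1
    · funext n
      have := hq_succ n
      simp only [p]
      push_cast
      linear_combination t ^ (2 * n + r + 2) * this
    · simp only [range_one, sum_singleton, CharP.cast_eq_zero, mul_zero, zero_add, hq_zero, p]
      ring
  have hSint : S = fun t => ∫ u in (0 : ℝ)..t, (F u + 2 * u * S u) := by
    funext t
    refine (hS t).unique ((hasSum_integral_of_hasSum_mul_pow hG hp t).congr_fun fun n => ?_)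
    simp only [p]
    field_simp
  have h := ((continuous_of_hasSum_mul_pow hG hp).integral_hasStrictDerivAt 0 t).hasDerivAt
  rwa [← hSint] at h

theorem eq_exp_sq_mul_integral_of_hasDerivAt {F S : ℝ → ℝ} (hF : Continuous F)
    (hS : ∀ t, HasDerivAt S (F t + 2 * t * S t) t) (hS0 : S 0 = 0) (x : ℝ) :
    S x = exp (x ^ 2) * ∫ u in (0 : ℝ)..x, exp (-u ^ 2) * F u := by
  have hderiv : ∀ t, HasDerivAt (fun t => exp (-t ^ 2) * S t) (exp (-t ^ 2) * F t) t := by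
    intro t
    have hexp : HasDerivAt (fun t => exp (-t ^ 2)) (exp (-t ^ 2) * (-(2 * t))) t := by
      simpa using ((hasDerivAt_pow 2 t).neg).exp
    exact (hexp.mul (hS t)).congr_deriv (by ring)
  have hint : IntervalIntegrable (fun u => exp (-u ^ 2) * F u) MeasureTheory.volume 0 x :=
    ((continuous_exp.comp (continuous_pow 2).neg).mul hF).intervalIntegrable 0 x
  rw [integral_eq_sub_of_hasDerivAt (fun t _ => hderiv t) hint, hS0, mul_zero, sub_zero,
    ← mul_assoc, ← exp_add, add_neg_cancel, exp_zero, one_mul]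

theorem hasSum_exp_sq_mul_integral {b q : ℕ → ℝ} {r : ℕ} {F : ℝ → ℝ}
    (hF : ∀ t, HasSum (fun n => b n * t ^ (2 * n + r)) (F t))
    (hb : EntireCoeffs b) (hq : EntireCoeffs q) (hq_zero : (r + 1 : ℝ) * q 0 = b 0)
    (hq_succ : ∀ n : ℕ, (2 * n + r + 3 : ℝ) * q (n + 1) = b (n + 1) + 2 * q n) (x : ℝ) :
    HasSum (fun n => q n * x ^ (2 * n + r + 1))
      (exp (x ^ 2) * ∫ u in (0 : ℝ)..x, exp (-u ^ 2) * F u) := by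
  set S : ℝ → ℝ := fun t => ∑' n, q n * t ^ (2 * n + r + 1)
  have hS : ∀ t, HasSum (fun n => q n * t ^ (2 * n + r + 1)) (S t) := fun t =>
    (hq.summable_mul_pow (r + 1) t).hasSum
  have hS0 : S 0 = 0 := by simp [S]
  rw [← eq_exp_sq_mul_integral_of_hasDerivAt (continuous_of_hasSum_mul_pow hF hb)
    (hasDerivAt_of_hasSum_of_recurrence hF hS hq hq_zero hq_succ) hS0]
  exact hS x

theorem two_pow_mul_factorial_le_doubleFactorial (n : ℕ) : 2 ^ n * n ! ≤ (2 * n + 1)‼ := by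
  induction n with
  | zero => simp
  | succ n ih =>
    rw [show 2 * (n + 1) + 1 = 2 * n + 1 + 2 by ring, Nat.doubleFactorial_add_two,
      Nat.factorial_succ, pow_succ]
    calc 2 ^ n * 2 * ((n + 1) * n !) = (2 * n + 2) * (2 ^ n * n !) := by ring
      _ ≤ (2 * n + 1 + 2) * (2 * n + 1)‼ := by gcongr; omega

noncomputable def expSqIntCoeff (n : ℕ) : ℝ := 2 ^ n / (2 * n + 1)‼

theorem expSqIntCoeff_succ (n : ℕ) :
    (2 * n + 3 : ℝ) * expSqIntCoeff (n + 1) = 2 * expSqIntCoeff n := by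
  rw [expSqIntCoeff, expSqIntCoeff, show 2 * (n + 1) + 1 = 2 * n + 1 + 2 by ring,
    Nat.doubleFactorial_add_two]
  have : ((2 * n + 1)‼ : ℝ) ≠ 0 := by positivity
  push_cast
  field_simp
  ring

theorem entireCoeffs_expSqIntCoeff : EntireCoeffs expSqIntCoeff := by
  refine .of_abs_le_inv_factorial fun n => ?_
  rw [expSqIntCoeff, abs_of_nonneg (by positivity), div_le_iff₀ (by positivity), inv_mul_eq_div,
    le_div_iff₀ (by positivity)]
  exact_mod_cast two_pow_mul_factorial_le_doubleFactorial n

theorem hasSum_expSqIntCoeff (t : ℝ) :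
    HasSum (fun n => expSqIntCoeff n * t ^ (2 * n + 1))
      (exp (t ^ 2) * ∫ u in (0 : ℝ)..t, exp (-u ^ 2)) := by
  have hone : ∀ t : ℝ, HasSum (fun n => (if n = 0 then 1 else 0) * t ^ (2 * n + 0)) 1 :=
    fun t => (hasSum_ite_eq 0 (1 : ℝ)).congr_fun fun n => by rcases n with _ | n <;> simp
  have hone_entire : EntireCoeffs fun n => if n = 0 then 1 else 0 :=
    fun R => (hasSum_ite_eq 0 (1 : ℝ)).summable.congr fun n => by split_ifs with h <;> simp [h]
  simpa using hasSum_exp_sq_mul_integral hone hone_entire entireCoeffs_expSqIntCoeff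
    (by simp [expSqIntCoeff]) (fun n => by simpa using expSqIntCoeff_succ n) t

theorem hasSum_integral_exp_sq_mul (x : ℝ) :
    HasSum (fun n => expSqIntCoeff n / (2 * n + 2) * x ^ (2 * n + 2))
      (∫ t in (0 : ℝ)..x, exp (t ^ 2) * ∫ u in (0 : ℝ)..t, exp (-u ^ 2)) := by
  refine (hasSum_integral_of_hasSum_mul_pow hasSum_expSqIntCoeff entireCoeffs_expSqIntCoeff
    x).congr_fun fun n => ?_
  push_cast
  ring_nf

noncomputable def doubleExpSqIntCoeff (n : ℕ) : ℝ :=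
  2 ^ n * (∑ k ∈ range (n + 1), (1 : ℝ) / (k + 1)) / (2 * (2 * n + 3)‼)

theorem doubleExpSqIntCoeff_succ (n : ℕ) :
    (2 * n + 5 : ℝ) * doubleExpSqIntCoeff (n + 1)
      = expSqIntCoeff (n + 1) / (2 * (n + 1) + 2) + 2 * doubleExpSqIntCoeff n := by
  have hdf : ((2 * (n + 1) + 3)‼ : ℝ) = (2 * n + 5) * (2 * n + 3)‼ := by
    rw [show 2 * (n + 1) + 3 = 2 * n + 3 + 2 by ring, Nat.doubleFactorial_add_two]
    push_cast
    ring
  have hpos : ((2 * n + 3)‼ : ℝ) ≠ 0 := by positivity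
  rw [doubleExpSqIntCoeff, doubleExpSqIntCoeff, expSqIntCoeff, hdf, sum_range_succ _ (n + 1),
    show 2 * (n + 1) + 1 = 2 * n + 3 by ring]
  push_cast
  field_simp
  ring

theorem abs_doubleExpSqIntCoeff_le (n : ℕ) :
    |doubleExpSqIntCoeff n| ≤ |expSqIntCoeff n| := by
  have hH : ∑ k ∈ range (n + 1), (1 : ℝ) / (k + 1) ≤ n + 1 := by
    calc ∑ k ∈ range (n + 1), (1 : ℝ) / (k + 1) ≤ ∑ _k ∈ range (n + 1), (1 : ℝ) :=
          sum_le_sum fun k _ => div_le_one_of_le₀ (by linarith [k.cast_nonneg (α := ℝ)])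
            (by positivity)
      _ = n + 1 := by simp
  rw [doubleExpSqIntCoeff, expSqIntCoeff, abs_of_nonneg (by positivity),
    abs_of_nonneg (by positivity), show 2 * n + 3 = 2 * n + 1 + 2 by ring,
    Nat.doubleFactorial_add_two, div_le_div_iff₀ (by positivity) (by positivity)]
  push_cast
  have : (0 : ℝ) < 2 ^ n * (2 * n + 1)‼ := by positivity
  nlinarith

theorem hasSum_doubleExpSqIntCoeff (t : ℝ) :
    HasSum (fun n => doubleExpSqIntCoeff n * t ^ (2 * n + 3))
      (exp (t ^ 2) * ∫ u in (0 : ℝ)..t, exp (-u ^ 2) *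
        ∫ s in (0 : ℝ)..u, exp (s ^ 2) * ∫ v in (0 : ℝ)..s, exp (-v ^ 2)) := by
  have hb : EntireCoeffs fun n => expSqIntCoeff n / (2 * n + 2) :=
    entireCoeffs_expSqIntCoeff.mono fun n => by
      rw [abs_div, abs_of_pos (by positivity : (0 : ℝ) < 2 * n + 2)]
      exact div_le_self (abs_nonneg _) (by linarith [n.cast_nonneg (α := ℝ)])
  refine hasSum_exp_sq_mul_integral (r := 2) hasSum_integral_exp_sq_mul hb
    (entireCoeffs_expSqIntCoeff.mono abs_doubleExpSqIntCoeff_le) ?_ (fun n => ?_) t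
  · norm_num [doubleExpSqIntCoeff, expSqIntCoeff, Nat.doubleFactorial]
  · push_cast
    linear_combination doubleExpSqIntCoeff_succ n

theorem hasSum_psi2 (x : ℝ) :
    HasSum (fun n : ℕ =>
        (2 : ℝ) ^ n * x ^ (2 * n + 4) / ((Nat.doubleFactorial (2 * n + 3) : ℝ) * (n + 2))
          * ∑ k ∈ Finset.range (n + 1), (1 : ℝ) / (k + 1))
      (psi2 x) := by
  refine ((hasSum_integral_of_hasSum_mul_pow hasSum_doubleExpSqIntCoeff
    (entireCoeffs_expSqIntCoeff.mono abs_doubleExpSqIntCoeff_le) x).mul_left 4).congr_fun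
    fun n => ?_
  have : ((2 * n + 3)‼ : ℝ) ≠ 0 := by positivity
  rw [doubleExpSqIntCoeff]
  push_cast
  field_simp
  ring_nf

theorem psi2_even_and_series (x : ℝ) :
    psi2 (-x) = psi2 x ∧
    HasSum (fun n : ℕ =>
        (2 : ℝ) ^ n * x ^ (2 * n + 4) / ((Nat.doubleFactorial (2 * n + 3) : ℝ) * (n + 2))
          * ∑ k ∈ Finset.range (n + 1), (1 : ℝ) / (k + 1))
      (psi2 x) := by
  refine ⟨(hasSum_psi2 (-x)).unique ((hasSum_psi2 x).congr_fun fun n => ?_), hasSum_psi2 x⟩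
  rw [(show Even (2 * n + 4) from ⟨n + 2, by ring⟩).neg_pow]
end

section
/- Let (τᵢ⁺)ᵢ, (τᵢ⁻)ᵢ be i.i.d. sequences of positive integrable random variables with means m⁺, m⁻, and let successes occur with probability p⁺ ∈ (0,1) independently. Let N_t⁺, N_t⁻ count successes and failures among trades completed by time t in the associated renewal process. Then almost surely N_t⁺/(N_t⁺+N_t⁻) → p⁺ and ((α⁺N_t⁺ + α⁻N_t⁻)/(Σᵢ₌₁^{N_t⁺}τᵢ⁺ + Σᵢ₌₁^{N_t⁻}τᵢ⁻)) → (p⁺α⁺ + (1-p⁺)α⁻)/(p⁺m⁺ + (1-p⁺)m⁻) as t → ∞, for any real α⁺, α⁻ with p⁺m⁺ + (1-p⁺)m⁻ > 0. -/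
/-!
By the strong law of large numbers, almost surely the frequency of successes among the first
`n` trades tends to `p⁺`, the running means of `(τᵢ⁺)` and `(τᵢ⁻)` tend to `m⁺` and `m⁻`, and the
running mean duration of a trade tends to a positive constant. The last fact makes the elapsed
time diverge, so the number `N_t` of completed trades tends to infinity. Along `N_t` the first
three give `N_t⁺ / N_t → p⁺`, `N_t⁻ / N_t → 1 - p⁺`, hence `N_t^± → ∞` and
`(∑_{i < N_t^±} τᵢ^±) / N_t → p^± m^±`; the long-run return is the quotient of the limits of
numerator and denominator, both divided by `N_t`.
-/

open MeasureTheory ProbabilityTheory Filter Topology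

section Deterministic

open Finset

variable {α : Type*} {l : Filter α}

theorem tendsto_atTop_of_tendsto_div {f g : α → ℝ} {p : ℝ} (hp : 0 < p)
    (hfg : Tendsto (fun a => f a / g a) l (𝓝 p)) (hg : Tendsto g l atTop) :
    Tendsto f l atTop := by
  refine (hfg.pos_mul_atTop hp hg).congr' ?_
  filter_upwards [hg.eventually_ne_atTop 0] with a ha
  exact div_mul_cancel₀ (f a) ha

theorem tendsto_sSup_setOf_le_atTop {S : ℕ → ℝ} (hS : Tendsto S atTop atTop) :
    Tendsto (fun t : ℝ => sSup {n : ℕ | S n ≤ t}) atTop atTop := by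
  refine tendsto_atTop.2 fun n => ?_
  filter_upwards [eventually_ge_atTop (S n)] with t ht
  obtain ⟨m, hm⟩ := (hS.eventually_gt_atTop t).exists_forall_of_atTop
  -- `sSup` of an unbounded subset of `ℕ` is `0`, so boundedness is essential here
  have hbdd : BddAbove {n : ℕ | S n ≤ t} :=
    ⟨m, fun k hk => not_lt.1 fun hmk => (hm k hmk.le).not_ge hk⟩
  exact le_csSup hbdd ht

theorem tendsto_sum_range_div_of_tendsto_average {x : ℕ → ℝ} {m q : ℝ} {k N : α → ℕ}
    (hx : Tendsto (fun n : ℕ => (∑ i ∈ range n, x i) / n) atTop (𝓝 m))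
    (hk : Tendsto k l atTop) (hkN : Tendsto (fun a => (k a : ℝ) / N a) l (𝓝 q)) :
    Tendsto (fun a => (∑ i ∈ range (k a), x i) / N a) l (𝓝 (m * q)) := by
  refine ((hx.comp hk).mul hkN).congr' ?_
  filter_upwards [hk.eventually_ne_atTop 0] with a ha
  exact div_mul_div_cancel₀ (Nat.cast_ne_zero.2 ha)

theorem card_filter_true_add_card_filter_false (b : ℕ → Bool) (n : ℕ) :
    #{i ∈ range n | b i = true} + #{i ∈ range n | b i = false} = n := by
  simpa using card_filter_add_card_filter_not (s := range n) (fun i => b i = true)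

theorem tendsto_card_filter_div {b : ℕ → Bool} {p : ℝ} {N : α → ℕ}
    (hb : Tendsto (fun n : ℕ => (#{i ∈ range n | b i = true} : ℝ) / n) atTop (𝓝 p))
    (hN : Tendsto N l atTop) :
    Tendsto (fun a => (#{i ∈ range (N a) | b i = true} : ℝ) / N a) l (𝓝 p) ∧
    Tendsto (fun a => (#{i ∈ range (N a) | b i = false} : ℝ) / N a) l (𝓝 (1 - p)) := by
  refine ⟨hb.comp hN, ((tendsto_const_nhds.sub hb).comp hN).congr' ?_⟩
  filter_upwards [hN.eventually_ne_atTop 0] with a ha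
  have hcount :
      (#{i ∈ range (N a) | b i = true} : ℝ) + #{i ∈ range (N a) | b i = false} = N a := by
    exact_mod_cast card_filter_true_add_card_filter_false b (N a)
  simp only [Function.comp_apply]
  field_simp
  linarith

theorem tendsto_long_run_return {b : ℕ → Bool} {xp xm : ℕ → ℝ} {p mp mm : ℝ} {N : α → ℕ}
    (hp : p ∈ Set.Ioo (0 : ℝ) 1)
    (hb : Tendsto (fun n : ℕ => (#{i ∈ range n | b i = true} : ℝ) / n) atTop (𝓝 p))
    (hxp : Tendsto (fun n : ℕ => (∑ i ∈ range n, xp i) / n) atTop (𝓝 mp))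
    (hxm : Tendsto (fun n : ℕ => (∑ i ∈ range n, xm i) / n) atTop (𝓝 mm))
    (hN : Tendsto N l atTop) (αp αm : ℝ) (hmean : 0 < p * mp + (1 - p) * mm) :
    Tendsto (fun a =>
        (αp * #{i ∈ range (N a) | b i = true} + αm * #{i ∈ range (N a) | b i = false}) /
          ((∑ i ∈ range #{i ∈ range (N a) | b i = true}, xp i) +
            ∑ i ∈ range #{i ∈ range (N a) | b i = false}, xm i))
      l (𝓝 ((p * αp + (1 - p) * αm) / (p * mp + (1 - p) * mm))) := by
  set Np := fun a => #{i ∈ range (N a) | b i = true}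
  set Nm := fun a => #{i ∈ range (N a) | b i = false}
  obtain ⟨hfreqp, hfreqm⟩ := tendsto_card_filter_div hb hN
  have hNR : Tendsto (fun a => (N a : ℝ)) l atTop := tendsto_natCast_atTop_atTop.comp hN
  have hNp : Tendsto Np l atTop := tendsto_natCast_atTop_iff.1 <|
    tendsto_atTop_of_tendsto_div hp.1 hfreqp hNR
  have hNm : Tendsto Nm l atTop := tendsto_natCast_atTop_iff.1 <|
    tendsto_atTop_of_tendsto_div (sub_pos.2 hp.2) hfreqm hNR
  have hnum : Tendsto (fun a => (αp * Np a + αm * Nm a) / (N a : ℝ)) l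
      (𝓝 (p * αp + (1 - p) * αm)) := by
    convert (hfreqp.const_mul αp).add (hfreqm.const_mul αm) using 2 <;> ring
  have hden : Tendsto (fun a => ((∑ i ∈ range (Np a), xp i) + ∑ i ∈ range (Nm a), xm i) / N a)
      l (𝓝 (p * mp + (1 - p) * mm)) := by
    convert (tendsto_sum_range_div_of_tendsto_average hxp hNp hfreqp).add
      (tendsto_sum_range_div_of_tendsto_average hxm hNm hfreqm) using 2 <;> ring
  refine (hnum.div hden hmean.ne').congr' ?_
  filter_upwards [hN.eventually_ne_atTop 0] with a ha
  exact div_div_div_cancel_right₀ (Nat.cast_ne_zero.2 ha) _ _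

end Deterministic

section Probabilistic

open Finset

variable {Ω E : Type*} [MeasurableSpace Ω] [MeasurableSpace E] {μ : Measure Ω}

theorem integral_pos_of_ae_pos [NeZero μ] {f : Ω → ℝ} (hf : Integrable f μ)
    (hpos : ∀ᵐ ω ∂μ, 0 < f ω) : 0 < ∫ ω, f ω ∂μ := by
  refine (integral_nonneg_of_ae (hpos.mono fun _ => le_of_lt)).lt_of_ne fun hzero => ?_
  have hnull := (integral_eq_zero_iff_of_nonneg_ae (hpos.mono fun _ => le_of_lt) hf).1 hzero.symm
  obtain ⟨ω, hω, hω0⟩ := (hpos.and hnull).exists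
  exact hω.ne' hω0

theorem ae_tendsto_average_comp_of_iid {Z : ℕ → Ω → E} (hindep : iIndepFun Z μ)
    (hident : ∀ i, IdentDistrib (Z i) (Z 0) μ μ) {f : E → ℝ} (hf : Measurable f)
    (hint : Integrable (fun ω => f (Z 0 ω)) μ) :
    ∀ᵐ ω ∂μ, Tendsto (fun n : ℕ => (∑ i ∈ range n, f (Z i ω)) / n) atTop
      (𝓝 (∫ ω, f (Z 0 ω) ∂μ)) :=
  strong_law_ae_real (fun i ω => f (Z i ω)) hint
    (fun _ _ hij => (hindep.indepFun hij).comp hf hf) fun i => (hident i).comp hf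

theorem ae_tendsto_frequency_of_iid [IsFiniteMeasure μ] {Z : ℕ → Ω → E}
    (hindep : iIndepFun Z μ) (hident : ∀ i, IdentDistrib (Z i) (Z 0) μ μ)
    (hZ : Measurable (Z 0)) {s : Set E} [DecidablePred (· ∈ s)] (hs : MeasurableSet s) :
    ∀ᵐ ω ∂μ, Tendsto (fun n : ℕ => (#{i ∈ range n | Z i ω ∈ s} : ℝ) / n) atTop
      (𝓝 (μ.real (Z 0 ⁻¹' s))) := by
  have h := ae_tendsto_average_comp_of_iid hindep hident (measurable_one.indicator hs)
    ((integrable_const (1 : ℝ)).indicator (hZ hs))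
  rw [show ∫ ω, s.indicator 1 (Z 0 ω) ∂μ = μ.real (Z 0 ⁻¹' s) from
    integral_indicator_one (hZ hs)] at h
  simpa only [Set.indicator_apply, Pi.one_apply, ← natCast_card_filter] using h

end Probabilistic

theorem long_run_return_as_convergence
    {Ω : Type*} [MeasurableSpace Ω] (μ : Measure Ω) [IsProbabilityMeasure μ]
    (τp τm : ℕ → Ω → ℝ) (B : ℕ → Ω → Bool)
    (hmeas : ∀ i, Measurable (fun ω => (τp i ω, τm i ω, B i ω)))
    -- the trades are i.i.d.:
    (hindep : iIndepFun
      (fun i ω => (τp i ω, τm i ω, B i ω)) μ)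
    (hident : ∀ i, IdentDistrib (fun ω => (τp i ω, τm i ω, B i ω))
      (fun ω => (τp 0 ω, τm 0 ω, B 0 ω)) μ μ)
    -- positive integrable durations with means m⁺, m⁻:
    (hposp : ∀ i, ∀ᵐ ω ∂μ, 0 < τp i ω) (hposm : ∀ i, ∀ᵐ ω ∂μ, 0 < τm i ω)
    (hintp : ∀ i, Integrable (τp i) μ) (hintm : ∀ i, Integrable (τm i) μ)
    (mp mm : ℝ) (hmp : ∀ i, ∫ ω, τp i ω ∂μ = mp) (hmm : ∀ i, ∫ ω, τm i ω ∂μ = mm)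
    -- success probability p⁺:
    (pp : ℝ) (hpp : pp ∈ Set.Ioo (0 : ℝ) 1)
    (hB : ∀ i, μ {ω | B i ω = true} = ENNReal.ofReal pp)
    -- renewal counting processes:
    (N : ℝ → Ω → ℕ)
    (hN : ∀ t ω, N t ω =
      sSup {n : ℕ | (∑ i ∈ Finset.range n, (if B i ω then τp i ω else τm i ω)) ≤ t})
    (Np Nm : ℝ → Ω → ℕ)
    (hNp : ∀ t ω, Np t ω = ((Finset.range (N t ω)).filter fun i => B i ω = true).card)
    (hNm : ∀ t ω, Nm t ω = ((Finset.range (N t ω)).filter fun i => B i ω = false).card)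
    (αp αm : ℝ) (hmean : 0 < pp * mp + (1 - pp) * mm) :
    ∀ᵐ ω ∂μ,
      Tendsto (fun t : ℝ => (Np t ω : ℝ) / ((Np t ω : ℝ) + (Nm t ω : ℝ)))
        atTop (nhds pp) ∧
      Tendsto (fun t : ℝ =>
          (αp * (Np t ω : ℝ) + αm * (Nm t ω : ℝ)) /
            ((∑ i ∈ Finset.range (Np t ω), τp i ω) + ∑ i ∈ Finset.range (Nm t ω), τm i ω))
        atTop (nhds ((pp * αp + (1 - pp) * αm) / (pp * mp + (1 - pp) * mm))) := by
  have hsuccess : MeasurableSet {x : ℝ × ℝ × Bool | x.2.2 = true} :=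
    measurable_snd.snd (measurableSet_singleton true)
  have hduration : Measurable fun x : ℝ × ℝ × Bool => if x.2.2 then x.1 else x.2.1 :=
    Measurable.ite hsuccess measurable_fst measurable_snd.fst
  have hdurint : Integrable (fun ω => if B 0 ω then τp 0 ω else τm 0 ω) μ :=
    Integrable.piecewise (s := {ω | B 0 ω}) (hmeas 0 hsuccess) (hintp 0).integrableOn
      (hintm 0).integrableOn
  have hprob :
      μ.real ((fun ω => (τp 0 ω, τm 0 ω, B 0 ω)) ⁻¹' {x | x.2.2 = true}) = pp :=
    (congrArg ENNReal.toReal (hB 0)).trans (ENNReal.toReal_ofReal hpp.1.le)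
  have hfreq := hprob ▸ ae_tendsto_frequency_of_iid hindep hident (hmeas 0) hsuccess
  have hτp := hmp 0 ▸ ae_tendsto_average_comp_of_iid hindep hident measurable_fst (hintp 0)
  have hτm := hmm 0 ▸ ae_tendsto_average_comp_of_iid hindep hident measurable_snd.fst (hintm 0)
  have hdur := ae_tendsto_average_comp_of_iid hindep hident hduration hdurint
  have hc : 0 < ∫ ω, (if B 0 ω then τp 0 ω else τm 0 ω) ∂μ :=
    integral_pos_of_ae_pos hdurint <| ((hposp 0).and (hposm 0)).mono fun ω h => by
      split
      exacts [h.1, h.2]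
  obtain rfl : Np = _ := funext₂ hNp
  obtain rfl : Nm = _ := funext₂ hNm
  filter_upwards [hfreq, hτp, hτm, hdur] with ω hfreqω hτpω hτmω hdurω
  have hNω : Tendsto (N · ω) atTop atTop := by
    simp only [hN]
    exact tendsto_sSup_setOf_le_atTop <|
      tendsto_atTop_of_tendsto_div hc hdurω tendsto_natCast_atTop_atTop
  refine ⟨(tendsto_card_filter_div hfreqω hNω).1.congr fun t => ?_,
    tendsto_long_run_return hpp hfreqω hτpω hτmω hNω αp αm hmean⟩
  rw [← Nat.cast_add, card_filter_true_add_card_filter_false]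
end
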